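/- arXiv:math/9810094 — 3 statements merged into one kernel-verified Lean document; each statement's English description precedes it below -/
import Mathlib

section
/- Let r ≥ 1 and suppose U : ℒ × Ω → ℝ is a potential satisfying, for constants C₁, C₂, M < ∞, λ > 0 and a function ℓ : ℤ^r × Ω → [0,∞): for all m ≥ M, all j, all ξ, |U(L_{j,m}, ξ)| ≤ C₁ m^{r−1} 1[m ≤ ℓ(j,ξ)] + C₂ m^{r−1} e^{−λ m} 1[m > ℓ(j,ξ)], and U(A,·) = 0 unless A = L_{j,m} for some (j,m). If ξ is such that ℓ(j,ξ) < ∞ for all j and for every i the set {j ≥ i : ℓ(j,ξ) ≥ |j−i|} is finite, then for every i the double sum ∑_{j ≥ i} ∑_{m ≥ |i−j|} |U(L_{j,m}, ξ)| is finite. -/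
open Real

/-- The ℓ¹-distance on the lattice `ℤ^r`. -/
def latDist {r : ℕ} (x y : Fin r → ℤ) : ℕ := ∑ t, (x t - y t).natAbs

lemma latDist_comm {r : ℕ} (x y : Fin r → ℤ) : latDist x y = latDist y x :=
  Finset.sum_congr rfl fun t _ => by rw [← neg_sub, Int.natAbs_neg]

lemma coord_le_latDist {r : ℕ} (x y : Fin r → ℤ) (t : Fin r) :
    (x t - y t).natAbs ≤ latDist x y := by
  unfold latDist
  exact Finset.single_le_sum (f := fun t => (x t - y t).natAbs) (fun _ _ => Nat.zero_le _)
    (Finset.mem_univ t)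

/-- The ℓ¹-ball of radius `m` around `i`, as a finset. -/
noncomputable def latBall {r : ℕ} (i : Fin r → ℤ) (m : ℕ) : Finset (Fin r → ℤ) :=
  Fintype.piFinset fun t => Finset.Icc (i t - (m : ℤ)) (i t + (m : ℤ))

lemma mem_latBall {r : ℕ} {i j : Fin r → ℤ} {m : ℕ} (h : latDist i j ≤ m) :
    j ∈ latBall i m := by
  simp only [latBall, Fintype.mem_piFinset, Finset.mem_Icc]
  intro t
  have := coord_le_latDist i j t
  omega

lemma latBall_card {r : ℕ} (i : Fin r → ℤ) (m : ℕ) :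
    (latBall i m).card = (2 * m + 1) ^ r := by
  rw [latBall, Fintype.card_piFinset]
  have h : ∀ t : Fin r, (Finset.Icc (i t - (m : ℤ)) (i t + (m : ℤ))).card = 2 * m + 1 := by
    intro t; rw [Int.card_Icc]; omega
  simp [h]

/-- Absolute-convergence criterion for the telescoping potential (Proposition 3.1).
`U j m ξ` stands for `U(L_{j,m}, ξ)` (the potential vanishes on all other sets);
sites are ordered lexicographically. If the potential satisfies the indicator
bound with lengths `ℓ(j,ξ)`, and for `ξ` the lengths are finite with
`{j ≥ i : ℓ(j,ξ) ≥ |j−i|}` finite for every `i`, then for every `i` the double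
sum `∑_{j ≥ i} ∑_{m ≥ |i−j|} |U(L_{j,m},ξ)|` is finite. -/
theorem stmt_3 {r : ℕ} (hr : 1 ≤ r)
    (Ω : Type*) (U : (Fin r → ℤ) → ℕ → Ω → ℝ)
    (ℓ : (Fin r → ℤ) → Ω → ℝ) (hℓnn : ∀ j ξ, 0 ≤ ℓ j ξ)
    (C₁ C₂ lam : ℝ) (M : ℕ) (hlam : 0 < lam)
    (hbound : ∀ (m : ℕ), M ≤ m → ∀ (j : Fin r → ℤ) (ξ : Ω),
      |U j m ξ| ≤ if (m : ℝ) ≤ ℓ j ξ then C₁ * (m : ℝ) ^ (r - 1)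
                  else C₂ * (m : ℝ) ^ (r - 1) * Real.exp (-lam * m))
    (ξ : Ω)
    (hfin : ∀ i : Fin r → ℤ,
      {j : Fin r → ℤ | toLex i ≤ toLex j ∧ (latDist j i : ℝ) ≤ ℓ j ξ}.Finite) :
    ∀ i : Fin r → ℤ,
      Summable (fun p : {p : (Fin r → ℤ) × ℕ //
          toLex i ≤ toLex p.1 ∧ latDist i p.1 ≤ p.2} => |U p.1.1 p.1.2 ξ|) := by
  intro i
  set x := Real.exp (-lam) with hx
  have hx0 : (0:ℝ) < x := Real.exp_pos _
  have hx1 : x < 1 := by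
    rw [hx, Real.exp_lt_one_iff]; linarith
  have hxm : ∀ m : ℕ, Real.exp (-lam * m) = x ^ m := by
    intro m
    rw [hx, ← Real.exp_nat_mul]
    congr 1; ring
  -- the basic summand bound
  set c : ℕ → ℝ := fun m => |C₂| * (m : ℝ) ^ (r - 1) * Real.exp (-lam * m) with hc
  have hcnn : ∀ m, 0 ≤ c m := fun m => by
    simp only [hc]; positivity
  -- summable geometric majorant
  have hgeo : Summable (fun n : ℕ => ((n : ℝ) + 1) ^ (r + (r - 1)) * x ^ n) := by
    have h1 : Summable (fun n : ℕ => (n : ℝ) ^ (r + (r - 1)) * x ^ n) :=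
      summable_pow_mul_geometric_of_norm_lt_one _
        (by rw [Real.norm_eq_abs, abs_of_pos hx0]; exact hx1)
    have h2 := (summable_nat_add_iff 1).2 h1
    have h3 := h2.mul_left x⁻¹
    refine h3.congr fun n => ?_
    have hxne : x ≠ 0 := ne_of_gt hx0
    push_cast
    rw [pow_succ]
    field_simp
  have hH : Summable (fun m : ℕ => |C₂| * 3 ^ r * ((m : ℝ) + 1) ^ (r + (r - 1)) * x ^ m) := by
    refine (hgeo.mul_left (|C₂| * 3 ^ r)).congr fun m => ?_
    ring
  -- the full majorant on pairs (m, j)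
  set F : ℕ × (Fin r → ℤ) → ℝ := fun q => if latDist i q.2 ≤ q.1 then c q.1 else 0 with hFdef
  have hFnn : (0:ℕ × (Fin r → ℤ) → ℝ) ≤ F := by
    intro q
    simp only [hFdef, Pi.zero_apply]
    split
    · exact hcnn _
    · exact le_rfl
  have hF : Summable F := by
    rw [summable_prod_of_nonneg hFnn]
    constructor
    · intro m
      apply summable_of_ne_finset_zero (s := latBall i m)
      intro j hj
      simp only [hFdef]
      rw [if_neg]
      intro h
      exact hj (mem_latBall h)
    · refine Summable.of_nonneg_of_le (fun m => tsum_nonneg fun j => hFnn _) ?_ hH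
      intro m
      have hts : ∑' j, F (m, j) = ∑ j ∈ latBall i m, F (m, j) := by
        apply tsum_eq_sum
        intro j hj
        simp only [hFdef]
        rw [if_neg]
        intro h
        exact hj (mem_latBall h)
      rw [hts]
      have hsum : ∑ j ∈ latBall i m, F (m, j) ≤ (latBall i m).card • c m := by
        apply Finset.sum_le_card_nsmul
        intro j _
        simp only [hFdef]
        split
        · exact le_rfl
        · exact hcnn m
      rw [latBall_card, nsmul_eq_mul] at hsum
      refine hsum.trans ?_
      have key : ((2 * m + 1 : ℕ) : ℝ) ^ r * (m : ℝ) ^ (r - 1)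
          ≤ 3 ^ r * ((m : ℝ) + 1) ^ (r + (r - 1)) := by
        have h1 : ((2 * m + 1 : ℕ) : ℝ) ^ r ≤ (3 * ((m : ℝ) + 1)) ^ r := by
          apply pow_le_pow_left₀ (by positivity) (by push_cast; linarith)
        have h2 : (m : ℝ) ^ (r - 1) ≤ ((m : ℝ) + 1) ^ (r - 1) := by
          apply pow_le_pow_left₀ (by positivity) (by linarith)
        calc ((2 * m + 1 : ℕ) : ℝ) ^ r * (m : ℝ) ^ (r - 1)
            ≤ (3 * ((m : ℝ) + 1)) ^ r * ((m : ℝ) + 1) ^ (r - 1) :=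
              mul_le_mul h1 h2 (by positivity) (by positivity)
          _ = 3 ^ r * ((m : ℝ) + 1) ^ (r + (r - 1)) := by rw [mul_pow, pow_add]; ring
      calc ((2 * m + 1) ^ r : ℕ) * c m
          = (|C₂| * x ^ m) * (((2 * m + 1 : ℕ) : ℝ) ^ r * (m : ℝ) ^ (r - 1)) := by
            simp only [hc]; rw [hxm m]; push_cast; ring
        _ ≤ (|C₂| * x ^ m) * (3 ^ r * ((m : ℝ) + 1) ^ (r + (r - 1))) :=
            mul_le_mul_of_nonneg_left key (by positivity)
        _ = |C₂| * 3 ^ r * ((m : ℝ) + 1) ^ (r + (r - 1)) * x ^ m := by ring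
  -- the injection from the index type into pairs
  set S := {p : (Fin r → ℤ) × ℕ // toLex i ≤ toLex p.1 ∧ latDist i p.1 ≤ p.2} with hS
  set e : S → ℕ × (Fin r → ℤ) := fun p => (p.1.2, p.1.1) with he
  have hinj : Function.Injective e := by
    intro a b hab
    apply Subtype.ext
    have h1 : a.1.2 = b.1.2 := congrArg Prod.fst hab
    have h2 : a.1.1 = b.1.1 := congrArg Prod.snd hab
    exact Prod.ext h2 h1
  -- the finite exceptional set
  set E : Set S := {p | p.1.2 < M ∨ (p.1.2 : ℝ) ≤ ℓ p.1.1 ξ} with hE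
  have hEfin : E.Finite := by
    set T₀ : Finset (Fin r → ℤ) := (hfin i).toFinset with hT₀
    set N : ℕ := T₀.sup (fun j => ⌈ℓ j ξ⌉₊) with hN
    have h2 : E = Subtype.val ⁻¹' {q : (Fin r → ℤ) × ℕ |
        (toLex i ≤ toLex q.1 ∧ latDist i q.1 ≤ q.2) ∧
        (q.2 < M ∨ (q.2 : ℝ) ≤ ℓ q.1 ξ)} := by
      ext p
      simp only [hE, Set.mem_setOf_eq, Set.mem_preimage]
      exact ⟨fun h => ⟨p.2, h⟩, fun h => h.2⟩
    rw [h2]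
    apply Set.Finite.preimage (Subtype.val_injective.injOn)
    apply Set.Finite.subset
      (((latBall i M ∪ T₀) ×ˢ Finset.range (max M (N + 1)) : Finset _) : Set _).toFinite
    rintro ⟨j, m⟩ ⟨⟨hlex, hd⟩, hcase⟩
    simp only [Finset.coe_product, Set.mem_prod, Finset.mem_coe, Finset.mem_union,
      Finset.mem_range]
    rcases hcase with hm | hm
    · exact ⟨Or.inl (mem_latBall (le_trans hd (le_of_lt hm))), lt_of_lt_of_le hm (le_max_left _ _)⟩
    · have hjT : j ∈ T₀ := by
        rw [hT₀, Set.Finite.mem_toFinset]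
        refine ⟨hlex, ?_⟩
        rw [latDist_comm]
        calc (latDist i j : ℝ) ≤ (m : ℝ) := by exact_mod_cast hd
          _ ≤ ℓ j ξ := hm
      have hmN : m ≤ N := by
        have h1 : (m : ℝ) ≤ (⌈ℓ j ξ⌉₊ : ℝ) := le_trans hm (Nat.le_ceil _)
        have h2 : m ≤ ⌈ℓ j ξ⌉₊ := by exact_mod_cast h1
        exact le_trans h2 (Finset.le_sup (f := fun j => ⌈ℓ j ξ⌉₊) hjT)
      exact ⟨Or.inr hjT, lt_of_lt_of_le (Nat.lt_succ_of_le hmN) (le_max_right _ _)⟩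
  -- conclude
  rw [← hEfin.summable_compl_iff]
  have hmaj : Summable ((F ∘ e) ∘ (Subtype.val : ↥Eᶜ → S)) :=
    (hF.comp_injective hinj).comp_injective Subtype.val_injective
  refine Summable.of_nonneg_of_le (fun p => abs_nonneg _) ?_ hmaj
  rintro ⟨p, hp⟩
  have hp' : ¬(p.1.2 < M ∨ (p.1.2 : ℝ) ≤ ℓ p.1.1 ξ) := hp
  push_neg at hp'
  obtain ⟨hM, hℓ⟩ := hp'
  have hb := hbound p.1.2 hM p.1.1 ξ
  rw [if_neg (not_le_of_gt hℓ)] at hb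
  have hFval : F (e p) = c p.1.2 := by
    simp only [hFdef, he]
    rw [if_pos p.2.2]
  simp only [Function.comp_apply]
  rw [hFval]
  refine hb.trans ?_
  simp only [hc]
  have h1 : C₂ * (p.1.2 : ℝ) ^ (r - 1) ≤ |C₂| * (p.1.2 : ℝ) ^ (r - 1) :=
    mul_le_mul_of_nonneg_right (le_abs_self C₂) (by positivity)
  exact mul_le_mul_of_nonneg_right h1 (Real.exp_nonneg _)
end

section
/- Let ν be a probability measure on Ω = {−1,+1}^ℤ and for ω ∈ Ω, j ∈ ℤ let ℓ_j⁺(ω) := min{n : ∀ k ≥ n, (1/k)∑_{s=0}^{k−1} ω(j+s) ≥ 8/9}. Suppose ν(ℓ_j⁺ > n) ≤ C e^{−βn} for all j, n. Define ũ_n(ω) := ∑_{j ≤ −n−1} (ℓ_j⁺(ω) − |j|)·1[ℓ_j⁺(ω) > |j|]. Then (∫ ũ_n² dν)^{1/2} ≤ C' e^{−βn/2} for some constant C' depending only on C and β, for all n large enough. -/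
open MeasureTheory

/-- Spin values ±1. -/
abbrev Spin : Type := {x : ℤ // x = -1 ∨ x = 1}

/-- Configurations on the layer ℤ. -/
abbrev Config : Type := ℤ → Spin

/-- `ℓ_j⁺(ω) = min{n : ∀ k ≥ n (k > 0), (1/k) ∑_{s<k} ω(j+s) ≥ 8/9}`. -/
noncomputable def ellPlus (j : ℤ) (ω : Config) : ℕ :=
  sInf {n : ℕ | ∀ k ≥ n, 0 < k →
    (8 / 9 : ℝ) ≤ (1 / (k : ℝ)) * ∑ s ∈ Finset.range k, ((ω (j + s) : ℤ) : ℝ)}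

/-- `ũ_n(ω) = ∑_{j ≤ −n−1} (ℓ_j⁺(ω) − |j|)·1[ℓ_j⁺(ω) > |j|]`. -/
noncomputable def utilde (n : ℕ) (ω : Config) : ℝ :=
  ∑' j : ℤ, if j ≤ -(n : ℤ) - 1 ∧ |j| < (ellPlus j ω : ℤ)
    then (ellPlus j ω : ℝ) - |(j : ℝ)| else 0

/-! ### Auxiliary lemmas -/

def Pset (j : ℤ) (m : ℕ) : Set Config :=
  {ω | ∀ k ≥ m, 0 < k →
    (8 / 9 : ℝ) ≤ (1 / (k : ℝ)) * ∑ s ∈ Finset.range k, ((ω (j + s) : ℤ) : ℝ)}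

lemma measurableSet_Pset (j : ℤ) (m : ℕ) : MeasurableSet (Pset j m) := by
  have h : Pset j m = ⋂ k : ℕ, {ω : Config | k ≥ m → 0 < k →
      (8 / 9 : ℝ) ≤ (1 / (k : ℝ)) * ∑ s ∈ Finset.range k, ((ω (j + s) : ℤ) : ℝ)} := by
    ext ω; simp [Pset, Set.mem_iInter]
  rw [h]
  refine MeasurableSet.iInter fun k => ?_
  by_cases h1 : k ≥ m
  · by_cases h2 : 0 < k
    · have he : {ω : Config | k ≥ m → 0 < k →
          (8 / 9 : ℝ) ≤ (1 / (k : ℝ)) * ∑ s ∈ Finset.range k, ((ω (j + s) : ℤ) : ℝ)}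
          = (fun ω : Config => (1 / (k : ℝ)) * ∑ s ∈ Finset.range k, ((ω (j + s) : ℤ) : ℝ)) ⁻¹'
            (Set.Ici (8/9 : ℝ)) := by
        ext ω; simp [h1, h2]
      rw [he]
      have hm : Measurable (fun ω : Config =>
          (1 / (k : ℝ)) * ∑ s ∈ Finset.range k, ((ω (j + s) : ℤ) : ℝ)) := by
        refine Measurable.const_mul ?_ _
        refine Finset.measurable_sum _ fun s _ => ?_
        exact measurable_from_top.comp ((measurable_subtype_coe).comp (measurable_pi_apply _))
      exact hm measurableSet_Ici
    · have : {ω : Config | k ≥ m → 0 < k →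
          (8 / 9 : ℝ) ≤ (1 / (k : ℝ)) * ∑ s ∈ Finset.range k, ((ω (j + s) : ℤ) : ℝ)} = Set.univ := by
        ext ω; simp [h2]
      rw [this]; exact MeasurableSet.univ
  · have : {ω : Config | k ≥ m → 0 < k →
        (8 / 9 : ℝ) ≤ (1 / (k : ℝ)) * ∑ s ∈ Finset.range k, ((ω (j + s) : ℤ) : ℝ)} = Set.univ := by
      ext ω; simp [h1]
    rw [this]; exact MeasurableSet.univ

lemma Pset_mono (j : ℤ) {m m' : ℕ} (h : m ≤ m') : Pset j m ⊆ Pset j m' :=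
  fun _ hω k hk => hω k (le_trans h hk)

lemma ellPlus_eq_sInf (j : ℤ) (ω : Config) : ellPlus j ω = sInf {m | ω ∈ Pset j m} := rfl

lemma measurable_ellPlus (j : ℤ) : Measurable (ellPlus j) := by
  refine measurable_to_countable' fun m => ?_
  rcases m with _ | r
  · have : ellPlus j ⁻¹' {0} = Pset j 0 ∪ (⋂ k : ℕ, (Pset j k)ᶜ) := by
      ext ω
      simp only [Set.mem_preimage, Set.mem_singleton_iff, Set.mem_union, Set.mem_iInter,
        Set.mem_compl_iff, ellPlus_eq_sInf]
      constructor
      · intro h0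
        by_cases hne : {m | ω ∈ Pset j m}.Nonempty
        · left; have := Nat.sInf_mem hne; rwa [h0] at this
        · right; intro k hk; exact hne ⟨k, hk⟩
      · rintro (h | h)
        · exact Nat.sInf_eq_zero.2 (Or.inl h)
        · refine Nat.sInf_eq_zero.2 (Or.inr ?_)
          ext k; simp only [Set.mem_setOf_eq, Set.mem_empty_iff_false, iff_false]
          exact h k
    rw [this]
    exact (measurableSet_Pset j 0).union (MeasurableSet.iInter fun k => (measurableSet_Pset j k).compl)
  · have : ellPlus j ⁻¹' {r+1} = Pset j (r+1) ∩ (Pset j r)ᶜ := by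
      ext ω
      simp only [Set.mem_preimage, Set.mem_singleton_iff, Set.mem_inter_iff, Set.mem_compl_iff,
        ellPlus_eq_sInf]
      constructor
      · intro h0
        have hne : {m | ω ∈ Pset j m}.Nonempty := by
          by_contra hne
          rw [Set.not_nonempty_iff_eq_empty] at hne
          rw [hne] at h0; simp at h0
        have hmem := Nat.sInf_mem hne
        rw [h0] at hmem
        refine ⟨hmem, fun hr => ?_⟩
        have : sInf {m | ω ∈ Pset j m} ≤ r := Nat.sInf_le hr
        omega
      · rintro ⟨h1, h2⟩
        have hle : sInf {m | ω ∈ Pset j m} ≤ r + 1 := Nat.sInf_le h1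
        have hgt : r < sInf {m | ω ∈ Pset j m} := by
          by_contra hle'
          push_neg at hle'
          have hmem := Nat.sInf_mem (⟨r+1, h1⟩ : Set.Nonempty {m | ω ∈ Pset j m})
          exact h2 (Pset_mono j hle' hmem)
        omega
    rw [this]
    exact (measurableSet_Pset j (r+1)).inter (measurableSet_Pset j r).compl

lemma sum_odds (N : ℕ) : ∑ k ∈ Finset.range N, (2*k+1) = N^2 := by
  induction N with
  | zero => simp
  | succ m ih => rw [Finset.sum_range_succ, ih]; ring

lemma weighted_amgm (θ x y : ℝ) (hx : 0 ≤ x) (hy : 0 ≤ y) :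
    2*(x*y) ≤ Real.exp θ * x^2 + Real.exp (-θ) * y^2 := by
  have h := two_mul_le_add_sq (Real.exp (θ/2) * x) (Real.exp (-(θ/2)) * y)
  have e1 : Real.exp (θ/2) * Real.exp (-(θ/2)) = 1 := by rw [← Real.exp_add]; simp
  have e2 : Real.exp (θ/2)^2 = Real.exp θ := by rw [sq, ← Real.exp_add]; ring_nf
  have e3 : Real.exp (-(θ/2))^2 = Real.exp (-θ) := by rw [sq, ← Real.exp_add]; ring_nf
  have key : 2*(x*y) = 2 * (Real.exp (θ/2) * x) * (Real.exp (-(θ/2)) * y) := by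
    rw [show 2 * (Real.exp (θ/2) * x) * (Real.exp (-(θ/2)) * y)
        = 2*(x*y)*(Real.exp (θ/2) * Real.exp (-(θ/2))) by ring, e1]
    ring
  have rhs : (Real.exp (θ/2) * x)^2 + (Real.exp (-(θ/2)) * y)^2
      = Real.exp θ * x^2 + Real.exp (-θ) * y^2 := by
    rw [mul_pow, mul_pow, e2, e3]
  linarith [h]

lemma summable_odd_exp {β : ℝ} (hβ : 0 < β) :
    Summable (fun k : ℕ => (2*(k:ℝ)+1) * Real.exp (-β*k)) := by
  have hr : ‖Real.exp (-β)‖ < 1 := by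
    rw [Real.norm_eq_abs, abs_of_pos (Real.exp_pos _)]
    exact Real.exp_lt_one_iff.2 (by linarith)
  have h1 := summable_pow_mul_geometric_of_norm_lt_one 1 hr
  have h0 := summable_pow_mul_geometric_of_norm_lt_one 0 hr
  have : Summable (fun k : ℕ => 2 * ((k:ℝ)^1 * Real.exp (-β)^k) + ((k:ℝ)^0 * Real.exp (-β)^k)) :=
    (h1.mul_left 2).add h0
  refine this.congr fun k => ?_
  rw [← Real.exp_nat_mul]
  ring_nf

/-- Lemma 6.3: exponential tails on `ℓ⁺` give `(∫ ũ_n² dν)^{1/2} ≤ C' e^{−βn/2}`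
for all large `n`. -/
theorem stmt_7 (ν : Measure Config) [IsProbabilityMeasure ν] (C β : ℝ)
    (hC : 0 < C) (hβ : 0 < β)
    (htail : ∀ (j : ℤ) (n : ℕ),
      ν {ω | (n : ℤ) < (ellPlus j ω : ℤ)} ≤ ENNReal.ofReal (C * Real.exp (-β * n))) :
    ∃ C' : ℝ, 0 < C' ∧ ∃ N : ℕ, ∀ n ≥ N,
      Real.sqrt (∫ ω, (utilde n ω) ^ 2 ∂ν) ≤ C' * Real.exp (-β * n / 2) := by
  classical
  set r2 : ℝ := Real.exp (-β/2) with hr2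
  have hr2pos : 0 < r2 := Real.exp_pos _
  have hr2lt : r2 < 1 := Real.exp_lt_one_iff.2 (by linarith)
  set Kb : ℝ := ∑' k : ℕ, (2*(k:ℝ)+1) * Real.exp (-β*k) with hKb
  have hKsum : Summable (fun k : ℕ => (2*(k:ℝ)+1) * Real.exp (-β*k)) := summable_odd_exp hβ
  have hKbpos : 0 < Kb := by
    have h1 : ((2*((0:ℕ):ℝ)+1) * Real.exp (-β*(0:ℕ))) ≤ Kb :=
      Summable.le_tsum hKsum 0 (fun i _ => by positivity)
    simp at h1
    linarith
  set Mr : ℝ := (1 - r2)⁻¹ with hMr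
  have hMrpos : 0 < Mr := inv_pos.2 (by linarith)
  set Ktot : ℝ := C * Kb * Mr^2 with hKtot
  have hKtotpos : 0 < Ktot := by positivity
  refine ⟨Real.sqrt Ktot, Real.sqrt_pos.2 hKtotpos, 0, fun n _ => ?_⟩
  -- the ENNReal-valued summands
  set bf : ℤ → ℕ → ℕ := fun j m => if j ≤ -(n:ℤ)-1 then m - j.natAbs else 0 with hbf
  set a : ℤ → Config → ENNReal := fun j ω => ((bf j (ellPlus j ω) : ℕ) : ENNReal) with ha
  have ha_meas : ∀ j, Measurable (a j) := fun j =>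
    (measurable_from_top (f := fun m : ℕ => ((bf j m : ℕ) : ENNReal))).comp (measurable_ellPlus j)
  -- tail bound for bf
  have htail' : ∀ (j : ℤ) (k : ℕ),
      ν {ω | k < bf j (ellPlus j ω)} ≤ ENNReal.ofReal (C * Real.exp (-β*((j.natAbs:ℝ)+k))) := by
    intro j k
    by_cases hj : j ≤ -(n:ℤ)-1
    · have hsub : {ω : Config | k < bf j (ellPlus j ω)}
          ⊆ {ω | ((j.natAbs + k : ℕ) : ℤ) < (ellPlus j ω : ℤ)} := by
        intro ω hω
        simp only [Set.mem_setOf_eq, hbf, if_pos hj] at hω ⊢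
        have : j.natAbs + k < ellPlus j ω := by omega
        exact_mod_cast this
      refine le_trans (measure_mono hsub) (le_trans (htail j _) ?_)
      apply ENNReal.ofReal_le_ofReal
      apply mul_le_mul_of_nonneg_left _ hC.le
      apply le_of_eq
      congr 1
      push_cast
      ring
    · have hempty : {ω : Config | k < bf j (ellPlus j ω)} = ∅ := by
        ext ω; simp only [hbf, if_neg hj]; simp
      rw [hempty]; simp
  -- measurability of tail sets
  have hms : ∀ (j : ℤ) (k : ℕ), MeasurableSet {ω' : Config | k < bf j (ellPlus j ω')} := by
    intro j k
    have hg : Measurable (fun ω : Config => bf j (ellPlus j ω)) :=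
      (measurable_from_top (f := bf j)).comp (measurable_ellPlus j)
    exact measurableSet_lt measurable_const hg
  -- layer cake for a j ^ 2
  have hlayer : ∀ (j : ℤ) (ω : Config), (a j ω)^2
      = ∑' k : ℕ, Set.indicator {ω' | k < bf j (ellPlus j ω')}
          (fun _ => ((2*k+1 : ℕ) : ENNReal)) ω := by
    intro j ω
    have hcong : ∀ k : ℕ, Set.indicator {ω' | k < bf j (ellPlus j ω')}
        (fun _ => ((2*k+1:ℕ) : ENNReal)) ω
        = if k < bf j (ellPlus j ω) then ((2*k+1:ℕ) : ENNReal) else 0 := by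
      intro k; by_cases h : k < bf j (ellPlus j ω) <;> simp [Set.indicator, h]
    rw [tsum_congr hcong,
      tsum_eq_sum (s := Finset.range (bf j (ellPlus j ω)))
        (fun k hk => by rw [if_neg (by simpa using hk)])]
    have : ∑ k ∈ Finset.range (bf j (ellPlus j ω)),
        (if k < bf j (ellPlus j ω) then ((2*k+1:ℕ) : ENNReal) else 0)
        = ∑ k ∈ Finset.range (bf j (ellPlus j ω)), ((2*k+1:ℕ) : ENNReal) := by
      refine Finset.sum_congr rfl fun k hk => by rw [if_pos (Finset.mem_range.1 hk)]
    rw [this, ← Nat.cast_sum, sum_odds, ha]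
    push_cast
    ring
  -- second moment bound for a j
  have hI : ∀ j : ℤ, ∫⁻ ω, (a j ω)^2 ∂ν
      ≤ ENNReal.ofReal (C * Kb * Real.exp (-β * (j.natAbs:ℝ))) := by
    intro j
    calc ∫⁻ ω, (a j ω)^2 ∂ν
        = ∑' k : ℕ, ∫⁻ ω, Set.indicator {ω' | k < bf j (ellPlus j ω')}
            (fun _ => ((2*k+1:ℕ) : ENNReal)) ω ∂ν := by
          rw [← lintegral_tsum (fun k => (measurable_const.indicator (hms j k)).aemeasurable)]
          exact lintegral_congr fun ω => hlayer j ω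
      _ = ∑' k : ℕ, ((2*k+1:ℕ) : ENNReal) * ν {ω' | k < bf j (ellPlus j ω')} := by
          refine tsum_congr fun k => ?_
          rw [lintegral_indicator (hms j k), setLIntegral_const]
      _ ≤ ∑' k : ℕ, ENNReal.ofReal (C * Real.exp (-β*(j.natAbs:ℝ)) * ((2*(k:ℝ)+1) * Real.exp (-β*k))) := by
          refine ENNReal.tsum_le_tsum fun k => ?_
          have h1 : ((2*k+1:ℕ) : ENNReal) = ENNReal.ofReal ((2*(k:ℝ)+1)) := by
            rw [show (2*(k:ℝ)+1) = ((2*k+1:ℕ):ℝ) by push_cast; ring, ENNReal.ofReal_natCast]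
          rw [h1]
          refine le_trans (mul_le_mul_right (htail' j k) _) ?_
          rw [← ENNReal.ofReal_mul (by positivity)]
          apply ENNReal.ofReal_le_ofReal
          apply le_of_eq
          rw [show Real.exp (-β*((j.natAbs:ℝ)+k)) = Real.exp (-β*(j.natAbs:ℝ)) * Real.exp (-β*k) by
            rw [← Real.exp_add]; ring_nf]
          ring
      _ = ENNReal.ofReal (C * Real.exp (-β*(j.natAbs:ℝ)) * Kb) := by
          rw [← ENNReal.ofReal_tsum_of_nonneg (fun k => by positivity)
            (hKsum.mul_left (C * Real.exp (-β*(j.natAbs:ℝ))))]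
          congr 1
          rw [hKb, tsum_mul_left]
      _ = ENNReal.ofReal (C * Kb * Real.exp (-β * (j.natAbs:ℝ))) := by
          congr 1; ring
  -- weights
  set d : ℤ → ENNReal := fun i => if i ≤ -(n:ℤ)-1
    then ENNReal.ofReal (Real.exp (-β * (i.natAbs:ℝ) / 2)) else 0 with hd
  -- cross term bound
  have hcross : ∀ i j : ℤ, ∫⁻ ω, a i ω * a j ω ∂ν ≤ ENNReal.ofReal (C*Kb) * (d i * d j) := by
    intro i j
    by_cases hi : i ≤ -(n:ℤ)-1
    · by_cases hj : j ≤ -(n:ℤ)-1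
      · set θ : ℝ := β * ((i.natAbs:ℝ) - (j.natAbs:ℝ)) / 2 with hθ
        have hpt : ∀ ω, 2 * (a i ω * a j ω)
            ≤ ENNReal.ofReal (Real.exp θ) * (a i ω)^2 + ENNReal.ofReal (Real.exp (-θ)) * (a j ω)^2 := by
          intro ω
          set x : ℝ := (bf i (ellPlus i ω) : ℝ) with hx
          set y : ℝ := (bf j (ellPlus j ω) : ℝ) with hy
          have hxa : a i ω = ENNReal.ofReal x := by rw [ha, hx, ENNReal.ofReal_natCast]
          have hya : a j ω = ENNReal.ofReal y := by rw [ha, hy, ENNReal.ofReal_natCast]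
          have hx0 : (0:ℝ) ≤ x := Nat.cast_nonneg _
          have hy0 : (0:ℝ) ≤ y := Nat.cast_nonneg _
          have hle := weighted_amgm θ x y hx0 hy0
          calc 2 * (a i ω * a j ω) = ENNReal.ofReal (2*(x*y)) := by
                rw [hxa, hya, ENNReal.ofReal_mul (by norm_num), ENNReal.ofReal_mul hx0]
                norm_num
            _ ≤ ENNReal.ofReal (Real.exp θ * x^2 + Real.exp (-θ) * y^2) :=
                ENNReal.ofReal_le_ofReal hle
            _ = ENNReal.ofReal (Real.exp θ) * (a i ω)^2 + ENNReal.ofReal (Real.exp (-θ)) * (a j ω)^2 := by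
                rw [ENNReal.ofReal_add (by positivity) (by positivity),
                  ENNReal.ofReal_mul (Real.exp_pos _).le, ENNReal.ofReal_mul (Real.exp_pos _).le,
                  hxa, hya, ENNReal.ofReal_pow hx0, ENNReal.ofReal_pow hy0]
        have hint : 2 * ∫⁻ ω, a i ω * a j ω ∂ν
            ≤ ENNReal.ofReal (Real.exp θ) * ∫⁻ ω, (a i ω)^2 ∂ν
              + ENNReal.ofReal (Real.exp (-θ)) * ∫⁻ ω, (a j ω)^2 ∂ν := by
          rw [← lintegral_const_mul (f := fun ω => a i ω * a j ω) _ ((ha_meas i).mul (ha_meas j)),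
            ← lintegral_const_mul (f := fun ω => a i ω ^ 2) _ ((ha_meas i).pow_const 2),
            ← lintegral_const_mul (f := fun ω => a j ω ^ 2) _ ((ha_meas j).pow_const 2),
            ← lintegral_add_left (f := fun ω => ENNReal.ofReal (Real.exp θ) * a i ω ^ 2) (measurable_const.mul ((ha_meas i).pow_const 2))]
          exact lintegral_mono hpt
        have hA : ENNReal.ofReal (Real.exp θ) * ∫⁻ ω, (a i ω)^2 ∂ν
            ≤ ENNReal.ofReal (C*Kb) * (d i * d j) := by
          refine le_trans (mul_le_mul_right (hI i) _) ?_
          rw [← ENNReal.ofReal_mul (Real.exp_pos _).le]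
          rw [hd]
          simp only [if_pos hi, if_pos hj]
          rw [← ENNReal.ofReal_mul (Real.exp_pos _).le, ← ENNReal.ofReal_mul (by positivity)]
          apply ENNReal.ofReal_le_ofReal
          apply le_of_eq
          rw [hθ, show Real.exp (β * ((i.natAbs:ℝ) - (j.natAbs:ℝ)) / 2) * (C * Kb * Real.exp (-β * (i.natAbs:ℝ)))
              = C * Kb * (Real.exp (β * ((i.natAbs:ℝ) - (j.natAbs:ℝ)) / 2) * Real.exp (-β * (i.natAbs:ℝ))) by ring,
            ← Real.exp_add, show β * ((i.natAbs:ℝ) - (j.natAbs:ℝ)) / 2 + -β * (i.natAbs:ℝ)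
              = -β * (i.natAbs:ℝ) / 2 + -β * (j.natAbs:ℝ) / 2 by ring, Real.exp_add]
        have hB : ENNReal.ofReal (Real.exp (-θ)) * ∫⁻ ω, (a j ω)^2 ∂ν
            ≤ ENNReal.ofReal (C*Kb) * (d i * d j) := by
          refine le_trans (mul_le_mul_right (hI j) _) ?_
          rw [← ENNReal.ofReal_mul (Real.exp_pos _).le]
          rw [hd]
          simp only [if_pos hi, if_pos hj]
          rw [← ENNReal.ofReal_mul (Real.exp_pos _).le, ← ENNReal.ofReal_mul (by positivity)]
          apply ENNReal.ofReal_le_ofReal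
          apply le_of_eq
          rw [hθ, show Real.exp (-(β * ((i.natAbs:ℝ) - (j.natAbs:ℝ)) / 2)) * (C * Kb * Real.exp (-β * (j.natAbs:ℝ)))
              = C * Kb * (Real.exp (-(β * ((i.natAbs:ℝ) - (j.natAbs:ℝ)) / 2)) * Real.exp (-β * (j.natAbs:ℝ))) by ring,
            ← Real.exp_add, show -(β * ((i.natAbs:ℝ) - (j.natAbs:ℝ)) / 2) + -β * (j.natAbs:ℝ)
              = -β * (i.natAbs:ℝ) / 2 + -β * (j.natAbs:ℝ) / 2 by ring, Real.exp_add]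
        have h2 : 2 * ∫⁻ ω, a i ω * a j ω ∂ν ≤ 2 * (ENNReal.ofReal (C*Kb) * (d i * d j)) := by
          refine le_trans hint ?_
          rw [two_mul]
          exact add_le_add hA hB
        exact (ENNReal.mul_le_mul_iff_right (by norm_num) (by norm_num)).1 h2
      · have hz : ∀ ω, a j ω = 0 := fun ω => by simp only [ha, hbf, if_neg hj]; simp
        have : ∫⁻ ω, a i ω * a j ω ∂ν = 0 := by
          simp [hz]
        rw [this]; exact zero_le
    · have hz : ∀ ω, a i ω = 0 := fun ω => by simp only [ha, hbf, if_neg hi]; simp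
      have : ∫⁻ ω, a i ω * a j ω ∂ν = 0 := by
        simp [hz]
      rw [this]; exact zero_le
  -- the dominating function
  set G : Config → ENNReal := fun ω => ∑' j : ℤ, a j ω with hG
  have hGsq : ∀ ω, G ω ^ 2 = ∑' i : ℤ, ∑' j : ℤ, a i ω * a j ω := by
    intro ω
    rw [sq, hG]
    rw [← ENNReal.tsum_mul_right]
    exact tsum_congr fun i => (ENNReal.tsum_mul_left).symm
  have hGint : ∫⁻ ω, G ω^2 ∂ν ≤ ENNReal.ofReal (C*Kb) * (∑' i : ℤ, d i)^2 := by
    calc ∫⁻ ω, G ω^2 ∂ν = ∑' i : ℤ, ∑' j : ℤ, ∫⁻ ω, a i ω * a j ω ∂ν := by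
          rw [lintegral_congr hGsq,
            lintegral_tsum (f := fun i ω => ∑' j : ℤ, a i ω * a j ω) (fun i =>
              (Measurable.ennreal_tsum (fun j => (ha_meas i).mul (ha_meas j))).aemeasurable)]
          exact tsum_congr fun i => lintegral_tsum (fun j => ((ha_meas i).mul (ha_meas j)).aemeasurable)
      _ ≤ ∑' i : ℤ, ∑' j : ℤ, ENNReal.ofReal (C*Kb) * (d i * d j) :=
          ENNReal.tsum_le_tsum fun i => ENNReal.tsum_le_tsum fun j => hcross i j
      _ = ENNReal.ofReal (C*Kb) * (∑' i : ℤ, d i)^2 := by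
          have h1 : ∀ i : ℤ, ∑' j : ℤ, ENNReal.ofReal (C*Kb) * (d i * d j)
              = (ENNReal.ofReal (C*Kb) * (∑' j : ℤ, d j)) * d i := by
            intro i
            calc ∑' j : ℤ, ENNReal.ofReal (C*Kb) * (d i * d j)
                = ∑' j : ℤ, (ENNReal.ofReal (C*Kb) * d i) * d j :=
                  tsum_congr fun j => by ring
              _ = (ENNReal.ofReal (C*Kb) * d i) * ∑' j : ℤ, d j := by
                  rw [← ENNReal.tsum_mul_left]
              _ = (ENNReal.ofReal (C*Kb) * (∑' j : ℤ, d j)) * d i := by ring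
          rw [tsum_congr h1, ENNReal.tsum_mul_left, sq]
          ring
  -- geometric sum of the weights
  have hS : ∑' i : ℤ, d i ≤ ENNReal.ofReal (Real.exp (-β*(n:ℝ)/2)) * ENNReal.ofReal Mr := by
    have hinj : Function.Injective (fun k : ℕ => -(n:ℤ)-1-(k:ℤ)) := by
      intro p q h; simp only at h; omega
    have hsupp : Function.support d ⊆ Set.range (fun k : ℕ => -(n:ℤ)-1-(k:ℤ)) := by
      intro i hi
      have hile : i ≤ -(n:ℤ)-1 := by
        by_contra h; exact hi (by simp only [hd, if_neg h])
      exact ⟨(-(n:ℤ)-1-i).toNat, by simp only; omega⟩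
    rw [← Function.Injective.tsum_eq hinj hsupp]
    have hterm : ∀ k : ℕ, d (-(n:ℤ)-1-(k:ℤ))
        = ENNReal.ofReal (Real.exp (-β*((n:ℝ)+1)/2)) * ENNReal.ofReal (Real.exp (-β/2))^k := by
      intro k
      have h1 : (-(n:ℤ)-1-(k:ℤ)) ≤ -(n:ℤ)-1 := by omega
      have h2 : (((-(n:ℤ)-1-(k:ℤ)).natAbs : ℕ) : ℝ) = (n:ℝ)+1+(k:ℝ) := by
        have h3 : (-(n:ℤ)-1-(k:ℤ)).natAbs = n+1+k := by omega
        rw [h3]; push_cast; ring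
      rw [hd]
      simp only [if_pos h1]
      rw [h2, ← ENNReal.ofReal_pow (Real.exp_pos _).le, ← ENNReal.ofReal_mul (Real.exp_pos _).le]
      congr 1
      rw [← Real.exp_nat_mul, ← Real.exp_add]
      congr 1
      ring
    rw [tsum_congr hterm, ENNReal.tsum_mul_left, ENNReal.tsum_geometric]
    have h3 : (1 : ENNReal) - ENNReal.ofReal r2 = ENNReal.ofReal (1 - r2) := by
      rw [ENNReal.ofReal_sub 1 hr2pos.le, ENNReal.ofReal_one]
    rw [hr2] at h3
    rw [h3, ← ENNReal.ofReal_inv_of_pos (by rw [← hr2]; linarith)]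
    refine mul_le_mul' (ENNReal.ofReal_le_ofReal (Real.exp_le_exp.2 ?_)) ?_
    · have hn0 : (0:ℝ) ≤ (n:ℝ) := Nat.cast_nonneg _
      nlinarith
    · apply le_of_eq; rw [hMr, hr2]
  -- total bound on the dominating function
  have hGfin : ∫⁻ ω, G ω^2 ∂ν ≤ ENNReal.ofReal (Ktot * Real.exp (-β*(n:ℝ))) := by
    refine le_trans hGint ?_
    calc ENNReal.ofReal (C*Kb) * (∑' i : ℤ, d i)^2
        ≤ ENNReal.ofReal (C*Kb) * (ENNReal.ofReal (Real.exp (-β*(n:ℝ)/2)) * ENNReal.ofReal Mr)^2 := by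
          exact mul_le_mul_right (pow_le_pow_left' hS 2) _
      _ = ENNReal.ofReal (Ktot * Real.exp (-β*(n:ℝ))) := by
          rw [← ENNReal.ofReal_mul (Real.exp_pos _).le, ← ENNReal.ofReal_pow (by positivity),
            ← ENNReal.ofReal_mul (by positivity)]
          congr 1
          have hexp2 : Real.exp (-β*(n:ℝ)/2)^2 = Real.exp (-β*(n:ℝ)) := by
            rw [sq, ← Real.exp_add]; ring_nf
          rw [hKtot, mul_pow, hexp2]
          ring
  -- pointwise domination of utilde
  have htnn : ∀ (j : ℤ) (ω : Config), 0 ≤ (if j ≤ -(n : ℤ) - 1 ∧ |j| < (ellPlus j ω : ℤ)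
      then (ellPlus j ω : ℝ) - |(j : ℝ)| else 0) := by
    intro j ω
    split_ifs with h
    · have h2 := h.2
      rw [sub_nonneg, ← Int.cast_abs]
      exact_mod_cast h2.le
    · exact le_refl 0
  have hterm_eq : ∀ (j : ℤ) (ω : Config),
      ENNReal.ofReal (if j ≤ -(n : ℤ) - 1 ∧ |j| < (ellPlus j ω : ℤ)
        then (ellPlus j ω : ℝ) - |(j : ℝ)| else 0) = a j ω := by
    intro j ω
    by_cases h1 : j ≤ -(n:ℤ)-1
    · by_cases h2 : |j| < (ellPlus j ω : ℤ)
      · rw [if_pos ⟨h1, h2⟩]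
        have hlt : j.natAbs < ellPlus j ω := by
          rw [Int.abs_eq_natAbs] at h2; exact_mod_cast h2
        have hN : (ellPlus j ω : ℝ) - |(j:ℝ)| = ((ellPlus j ω - j.natAbs : ℕ) : ℝ) := by
          rw [← Int.cast_abs, Int.abs_eq_natAbs, Nat.cast_sub hlt.le, Int.cast_natCast,
            Nat.cast_natAbs]
        rw [hN, ENNReal.ofReal_natCast, ha]
        simp only [hbf, if_pos h1]
      · rw [if_neg (by tauto)]
        have hle : ellPlus j ω ≤ j.natAbs := by
          rw [Int.abs_eq_natAbs] at h2
          push_neg at h2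
          exact_mod_cast h2
        have hz : bf j (ellPlus j ω) = 0 := by
          simp only [hbf, if_pos h1]
          omega
        simp [ha, hz]
    · rw [if_neg (by tauto)]
      simp only [ha, hbf, if_neg h1]; simp
  have hut_le : ∀ ω, ENNReal.ofReal (utilde n ω) ≤ G ω := by
    intro ω
    by_cases hs : Summable (fun j : ℤ => if j ≤ -(n : ℤ) - 1 ∧ |j| < (ellPlus j ω : ℤ)
        then (ellPlus j ω : ℝ) - |(j : ℝ)| else 0)
    · rw [utilde, ENNReal.ofReal_tsum_of_nonneg (fun j => htnn j ω) hs, hG]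
      exact le_of_eq (tsum_congr fun j => hterm_eq j ω)
    · rw [utilde, tsum_eq_zero_of_not_summable hs]
      simp
  have hut_nonneg : ∀ ω, 0 ≤ utilde n ω := fun ω => tsum_nonneg (fun j => htnn j ω)
  by_cases hint : Integrable (fun ω => utilde n ω ^ 2) ν
  · have h1 : ENNReal.ofReal (∫ ω, utilde n ω ^2 ∂ν) = ∫⁻ ω, ENNReal.ofReal (utilde n ω^2) ∂ν :=
      ofReal_integral_eq_lintegral_ofReal hint (Filter.Eventually.of_forall fun ω => sq_nonneg _)
    have h2 : ∫⁻ ω, ENNReal.ofReal (utilde n ω^2) ∂ν ≤ ENNReal.ofReal (Ktot * Real.exp (-β*(n:ℝ))) := by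
      refine le_trans (lintegral_mono fun ω => ?_) hGfin
      rw [ENNReal.ofReal_pow (hut_nonneg ω)]
      exact pow_le_pow_left' (hut_le ω) 2
    have h3 : ∫ ω, utilde n ω^2 ∂ν ≤ Ktot * Real.exp (-β*(n:ℝ)) := by
      rw [← h1] at h2
      exact (ENNReal.ofReal_le_ofReal_iff (by positivity)).1 h2
    calc Real.sqrt (∫ ω, utilde n ω^2 ∂ν) ≤ Real.sqrt (Ktot * Real.exp (-β*(n:ℝ))) :=
          Real.sqrt_le_sqrt h3
      _ = Real.sqrt Ktot * Real.exp (-β * (n:ℝ) / 2) := by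
          rw [Real.sqrt_mul hKtotpos.le]
          congr 1
          rw [show Real.exp (-β*(n:ℝ)) = Real.exp (-β*(n:ℝ)/2)^2 by rw [sq, ← Real.exp_add]; ring_nf]
          exact Real.sqrt_sq (Real.exp_pos _).le
  · rw [integral_undef hint, Real.sqrt_zero]
    positivity
end

section
/- Vacuum property characterization: let v be a potential on finite subsets of ℤ defined by v(A,ξ) = ∑_{V ⊆ A} (−1)^{|A\V|} H_V(ξ) where H_V(ξ) depends only on ξ restricted to V and satisfies H_V(ξ) = H_{V\{i\}}(ξ) whenever i ∈ V and ξ(i) = +1. Then v(A, ξ) = 0 whenever there exists i ∈ A with ξ(i) = +1. -/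
/-! Split `A = insert i s` with `i ∉ s`: the subsets of `A` pair up as `V` and `insert i V`
for `V ⊆ s`, the two carry opposite signs, and dropping the `+`-site `i` makes their
energies equal, so the alternating sum cancels pairwise. -/

namespace Finset

variable {α R : Type*} [DecidableEq α] [Ring R]

theorem sum_powerset_neg_one_pow_card_sdiff_mul_eq_zero {A : Finset α} {i : α} (hi : i ∈ A)
    (f : Finset α → R) (hf : ∀ V ⊆ A.erase i, f (insert i V) = f V) :
    ∑ V ∈ A.powerset, (-1 : R) ^ (A \ V).card * f V = 0 := by
  set s := A.erase i
  have his : i ∉ s := notMem_erase i A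
  rw [← insert_erase hi, sum_powerset_insert his, ← sum_add_distrib]
  refine sum_eq_zero fun V hV => ?_
  have hVs : V ⊆ s := mem_powerset.mp hV
  have hiV : i ∉ V := fun h => his (hVs h)
  have hcard : (insert i s \ V).card = (s \ V).card + 1 := by
    rw [insert_sdiff_of_notMem s hiV, card_insert_of_notMem fun h => his (mem_sdiff.mp h).1]
  rw [insert_sdiff_insert, sdiff_insert_of_notMem his, hcard, hf V hVs, pow_succ, mul_neg_one,
    neg_mul, neg_add_cancel]

end Finset

theorem stmt_18_general (H : Finset ℤ → (ℤ → ℤ) → ℝ)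
    (hdrop : ∀ (V : Finset ℤ) (i : ℤ) (ξ : ℤ → ℤ), i ∈ V → ξ i = 1 →
      H V ξ = H (V.erase i) ξ)
    (v : Finset ℤ → (ℤ → ℤ) → ℝ)
    (hv : ∀ (A : Finset ℤ) (ξ : ℤ → ℤ),
      v A ξ = ∑ V ∈ A.powerset, (-1 : ℝ) ^ (A \ V).card * H V ξ) :
    ∀ (A : Finset ℤ) (ξ : ℤ → ℤ) (i : ℤ), i ∈ A → ξ i = 1 → v A ξ = 0 := by
  intro A ξ i hiA hξ
  rw [hv]
  refine Finset.sum_powerset_neg_one_pow_card_sdiff_mul_eq_zero hiA (H · ξ) fun V hV => ?_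
  have hiV : i ∉ V := fun h => Finset.notMem_erase i A (hV h)
  rw [hdrop _ i ξ (Finset.mem_insert_self i V) hξ, Finset.erase_insert hiV]

/-- Vacuum property of the vacuum potential (Section 3): if each `H V` depends
only on the coordinates in `V` and is insensitive to removing a site where the
configuration is `+1`, then the Möbius transform
`v(A,ξ) = ∑_{V ⊆ A} (−1)^{|A\V|} H_V(ξ)` vanishes as soon as `ξ(i) = +1` for
some `i ∈ A`. -/
theorem stmt_18 (H : Finset ℤ → (ℤ → ℤ) → ℝ)
    (hlocal : ∀ (V : Finset ℤ) (ξ ξ' : ℤ → ℤ), (∀ x ∈ V, ξ x = ξ' x) → H V ξ = H V ξ')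
    (hdrop : ∀ (V : Finset ℤ) (i : ℤ) (ξ : ℤ → ℤ), i ∈ V → ξ i = 1 →
      H V ξ = H (V.erase i) ξ)
    (v : Finset ℤ → (ℤ → ℤ) → ℝ)
    (hv : ∀ (A : Finset ℤ) (ξ : ℤ → ℤ),
      v A ξ = ∑ V ∈ A.powerset, (-1 : ℝ) ^ (A \ V).card * H V ξ) :
    ∀ (A : Finset ℤ) (ξ : ℤ → ℤ) (i : ℤ), i ∈ A → ξ i = 1 → v A ξ = 0 :=
  stmt_18_general H hdrop v hv
end
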